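/- For every k ∈ {1,…,n}, the (d_k−d_{k−1})×m matrix u_k has maximal rank, i.e. rank u_k = d_k − d_{k−1}. -/

import Mathlib

open Matrix MeasureTheory

noncomputable section

/-- The span of the vectors `A^l B v` for `l < N`, `v ∈ ℝ^m`; for `N = k` this is `E_k`. -/
def kalmanSpan (d m : ℕ) (A : Matrix (Fin d) (Fin d) ℝ) (B : Matrix (Fin d) (Fin m) ℝ)
    (N : ℕ) : Submodule ℝ (Fin d → ℝ) :=
  Submodule.span ℝ {x | ∃ l, l < N ∧ ∃ v : Fin m → ℝ, x = (A ^ l * B).mulVec v}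

/-- `d_k = dim E_k` (with `d_0 = 0`). -/
def dk {d m : ℕ} (A : Matrix (Fin d) (Fin d) ℝ) (B : Matrix (Fin d) (Fin m) ℝ) (k : ℕ) : ℕ :=
  Module.finrank ℝ (kalmanSpan d m A B k)

/-- The matrix `u_k`, of size `(d_k − d_{k−1}) × m`, with entries
`(u_k)_{j,i} = ⟨e_{d_{k−1}+j}, A^{k−1} B e_i⟩ / (k−1)!` (zero-based row index `j`; the index
`d_{k−1}+j` always lies in range, so the guard is always satisfied). -/
def uMat {d m : ℕ} (A : Matrix (Fin d) (Fin d) ℝ) (B : Matrix (Fin d) (Fin m) ℝ)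
    (e : Fin d → Fin d → ℝ) (k : ℕ) :
    Matrix (Fin (dk A B k - dk A B (k - 1))) (Fin m) ℝ :=
  Matrix.of fun j i =>
    if h : dk A B (k - 1) + (j : ℕ) < d then
      (e ⟨dk A B (k - 1) + (j : ℕ), h⟩ ⬝ᵥ fun a => (A ^ (k - 1) * B) a i) /
        Nat.factorial (k - 1)
    else 0

/-! Let `F` be the matrix whose rows are `e_{d_{k-1}}, …, e_{d_k - 1}`, so that
`u_k = F A^{k-1} B / (k-1)!`. For `w : ℝ^{d_k - d_{k-1}}` the vector `Fᵀ w` lies in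
`E_k = E_{k-1} + range (A^{k-1} B)`, say `Fᵀ w = y + A^{k-1} B v`. The rows of `F` are orthonormal
and orthogonal to `E_{k-1}`, hence `F A^{k-1} B v = F Fᵀ w - F y = w`: the map `u_k` is onto. -/

theorem Matrix.rank_mul_eq_card_of_mul_eq_one {K ι κ n : Type*} [Field K] [Fintype ι]
    [DecidableEq ι] [Fintype κ] [Fintype n] {F : Matrix ι n K} {G : Matrix n ι K}
    {C : Matrix n κ K} (hFG : F * G = 1)
    (hG : LinearMap.range G.mulVecLin ≤
      LinearMap.ker F.mulVecLin ⊔ LinearMap.range C.mulVecLin) :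
    (F * C).rank = Fintype.card ι := by
  have hsurj : Function.Surjective (F * C).mulVecLin := by
    intro w
    obtain ⟨y, hy, _, ⟨v, rfl⟩, hyv⟩ := Submodule.mem_sup.mp (hG ⟨w, rfl⟩)
    rw [LinearMap.mem_ker, mulVecLin_apply] at hy
    rw [mulVecLin_apply, mulVecLin_apply] at hyv
    refine ⟨v, ?_⟩
    calc (F * C) *ᵥ v = F *ᵥ (y + C *ᵥ v) := by
          rw [mulVec_add, hy, zero_add, mulVec_mulVec]
      _ = w := by rw [hyv, mulVec_mulVec, hFG, one_mulVec]
  rw [rank, LinearMap.range_eq_top.mpr hsurj, finrank_top, Module.finrank_fintype_fun_eq_card]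

section Orthonormal

variable {K : Type*} [Field K] {d : ℕ}

def basisSpan (e : Fin d → Fin d → K) (p : ℕ) : Submodule K (Fin d → K) :=
  Submodule.span K {x | ∃ j : Fin d, (j : ℕ) < p ∧ x = e j}

@[simp]
lemma basisSpan_zero (e : Fin d → Fin d → K) : basisSpan e 0 = ⊥ :=
  Submodule.span_eq_bot.mpr fun _ ⟨j, hj, _⟩ => absurd hj j.val.not_lt_zero

variable {ι : Type*} {e : Fin d → Fin d → K}

lemma submatrix_mul_transpose_eq_one [Fintype ι] [DecidableEq ι]
    (h_on : ∀ i j : Fin d, e i ⬝ᵥ e j = if i = j then (1 : K) else 0) (f : ι ↪ Fin d) :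
    (of e).submatrix f id * ((of e).submatrix f id)ᵀ = 1 := by
  ext j j'
  change e (f j) ⬝ᵥ e (f j') = _
  rw [h_on, one_apply]
  exact if_congr f.injective.eq_iff rfl rfl

lemma basisSpan_le_ker_submatrix
    (h_on : ∀ i j : Fin d, e i ⬝ᵥ e j = if i = j then (1 : K) else 0) {f : ι → Fin d}
    {p : ℕ} (hf : ∀ j, p ≤ f j) :
    basisSpan e p ≤ LinearMap.ker ((of e).submatrix f id).mulVecLin := by
  refine Submodule.span_le.mpr ?_
  rintro _ ⟨i, hi, rfl⟩
  ext j
  have hne : f j ≠ i := fun h => (hf j).not_gt (h ▸ hi)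
  change e (f j) ⬝ᵥ e i = 0
  rw [h_on, if_neg hne]

lemma range_transpose_submatrix_le_basisSpan [Fintype ι] {f : ι → Fin d} {q : ℕ}
    (hf : ∀ j, f j < q) :
    LinearMap.range ((of e).submatrix f id)ᵀ.mulVecLin ≤ basisSpan e q := by
  rw [range_mulVecLin]
  refine Submodule.span_le.mpr ?_
  rintro _ ⟨j, rfl⟩
  exact Submodule.subset_span ⟨f j, hf j, rfl⟩

end Orthonormal

def shiftEmb (a : ℕ) {b d : ℕ} (hb : b ≤ d) : Fin (b - a) ↪ Fin d where
  toFun j := ⟨a + j, by have := j.2; omega⟩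
  inj' _ _ h := Fin.ext (by simpa using congrArg Fin.val h)

lemma shiftEmb_lt (a : ℕ) {b d : ℕ} (hb : b ≤ d) (j : Fin (b - a)) :
    (shiftEmb a hb j : ℕ) < b := by
  have := j.2
  change a + j < b
  omega

section Kalman

variable {d m : ℕ} (A : Matrix (Fin d) (Fin d) ℝ) (B : Matrix (Fin d) (Fin m) ℝ)

lemma kalmanSpan_zero : kalmanSpan d m A B 0 = ⊥ :=
  Submodule.span_eq_bot.mpr fun _ ⟨l, hl, _⟩ => absurd hl l.not_lt_zero

lemma kalmanSpan_mono : Monotone (kalmanSpan d m A B) := fun _ _ hN =>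
  Submodule.span_mono fun _ ⟨l, hl, v, hx⟩ => ⟨l, hl.trans_le hN, v, hx⟩

lemma kalmanSpan_succ (N : ℕ) :
    kalmanSpan d m A B (N + 1) =
      kalmanSpan d m A B N ⊔ LinearMap.range (A ^ N * B).mulVecLin := by
  apply le_antisymm
  · refine Submodule.span_le.mpr ?_
    rintro _ ⟨l, hl, v, rfl⟩
    rcases (Nat.lt_succ_iff.mp hl).lt_or_eq with hl | rfl
    · exact Submodule.mem_sup_left (Submodule.subset_span ⟨l, hl, v, rfl⟩)
    · exact Submodule.mem_sup_right ⟨v, rfl⟩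
  · refine sup_le (kalmanSpan_mono A B N.le_succ) ?_
    rintro _ ⟨v, rfl⟩
    exact Submodule.subset_span ⟨N, N.lt_succ_self, v, rfl⟩

@[simp]
lemma dk_zero : dk A B 0 = 0 := by
  rw [dk, kalmanSpan_zero, finrank_bot]

lemma dk_le (k : ℕ) : dk A B k ≤ d := by
  simpa [dk] using Submodule.finrank_le (kalmanSpan d m A B k)

lemma uMat_eq_smul_mul (e : Fin d → Fin d → ℝ) (k : ℕ) :
    uMat A B e k = ((k - 1).factorial : ℝ)⁻¹ •
      ((of e).submatrix (shiftEmb (dk A B (k - 1)) (dk_le A B k)) id * (A ^ (k - 1) * B)) := by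
  ext j i
  have hj : dk A B (k - 1) + (j : ℕ) < d := (shiftEmb _ (dk_le A B k) j).2
  rw [uMat, of_apply, dif_pos hj, div_eq_inv_mul]
  rfl

end Kalman

theorem uMat_rank_general
    (d m : ℕ)
    (A : Matrix (Fin d) (Fin d) ℝ) (B : Matrix (Fin d) (Fin m) ℝ)
    (n : ℕ)
    (e : Fin d → Fin d → ℝ)
    (h_on : ∀ i j : Fin d, e i ⬝ᵥ e j = if i = j then (1:ℝ) else 0)
    (h_adapt : ∀ k : ℕ, 1 ≤ k → k ≤ n →
      kalmanSpan d m A B k =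
        Submodule.span ℝ {x | ∃ j : Fin d, (j : ℕ) < dk A B k ∧ x = e j}) :
    ∀ k : ℕ, 1 ≤ k → k ≤ n → (uMat A B e k).rank = dk A B k - dk A B (k - 1) := by
  intro k hk1 hkn
  have hE : ∀ l ≤ n, kalmanSpan d m A B l = basisSpan e (dk A B l) := by
    intro l hl
    rcases Nat.eq_zero_or_pos l with rfl | hl1
    · rw [kalmanSpan_zero, dk_zero, basisSpan_zero]
    · exact h_adapt l hl1 hl
  set F := (of e).submatrix (shiftEmb (dk A B (k - 1)) (dk_le A B k)) id
  have hG : LinearMap.range Fᵀ.mulVecLin ≤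
      LinearMap.ker F.mulVecLin ⊔ LinearMap.range (A ^ (k - 1) * B).mulVecLin :=
    calc LinearMap.range Fᵀ.mulVecLin ≤ basisSpan e (dk A B k) :=
          range_transpose_submatrix_le_basisSpan (shiftEmb_lt _ (dk_le A B k))
      _ = kalmanSpan d m A B (k - 1 + 1) := by rw [Nat.sub_add_cancel hk1, hE k hkn]
      _ = basisSpan e (dk A B (k - 1)) ⊔ LinearMap.range (A ^ (k - 1) * B).mulVecLin := by
          rw [kalmanSpan_succ, hE (k - 1) (by omega)]
      _ ≤ _ := sup_le_sup_right (basisSpan_le_ker_submatrix h_on fun _ => Nat.le_add_right _ _) _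
  rw [uMat_eq_smul_mul, rank_smul_of_mem_nonZeroDivisors _ (mem_nonZeroDivisors_of_ne_zero
    (by positivity)), rank_mul_eq_card_of_mul_eq_one (submatrix_mul_transpose_eq_one h_on _) hG,
    Fintype.card_fin]

/-- For every `k ∈ {1,…,n}`, the matrix `u_k` has maximal rank `d_k − d_{k−1}`. -/
theorem uMat_rank
    (d m : ℕ) (hd : 0 < d) (hm : 0 < m)
    (A : Matrix (Fin d) (Fin d) ℝ) (B : Matrix (Fin d) (Fin m) ℝ)
    (n : ℕ) (hK : kalmanSpan d m A B n = ⊤)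
    (hmin : ∀ N : ℕ, kalmanSpan d m A B N = ⊤ → n ≤ N)
    (e : Fin d → Fin d → ℝ)
    (h_on : ∀ i j : Fin d, e i ⬝ᵥ e j = if i = j then (1:ℝ) else 0)
    (h_adapt : ∀ k : ℕ, 1 ≤ k → k ≤ n →
      kalmanSpan d m A B k =
        Submodule.span ℝ {x | ∃ j : Fin d, (j : ℕ) < dk A B k ∧ x = e j}) :
    ∀ k : ℕ, 1 ≤ k → k ≤ n → (uMat A B e k).rank = dk A B k - dk A B (k - 1) :=
  uMat_rank_general d m A B n e h_on h_adapt
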